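/- Let G be a 3-edge-connected graph, let C = {e1, e2, e3} be a 3-edge cut of G, and let G' be the graph obtained from G by removing e1, e2, e3 and adding two new vertices x, y together with edges joining y to the three endpoints of e1, e2, e3 lying in one component of G \ C, and joining x to the three endpoints lying in the other component. Then two original vertices a, b of G are 4-edge-connected in G if and only if they lie in the same connected component of G' and are 4-edge-connected in that component. -/

import Mathlib

variable {V E : Type}

/-- Reachability in the multigraph with edge-endpoint map `ends`,
avoiding (i.e. after deleting) the edges in `S`. -/
def Reach (ends : E → V × V) (S : Set E) : V → V → Prop :=
  Relation.ReflTransGen (fun a b => ∃ e, e ∉ S ∧ (ends e = (a, b) ∨ ends e = (b, a)))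

/-- The multigraph is connected. -/
def Connected (ends : E → V × V) : Prop := ∀ u v : V, Reach ends ∅ u v

/-- `u` and `v` are `k`-edge-connected: no set of at most `k - 1` edges separates them. -/
def KConn (ends : E → V × V) (k : ℕ) (u v : V) : Prop :=
  ∀ S : Finset E, S.card ≤ k - 1 → Reach ends (↑S) u v

/-- The multigraph is `k`-edge-connected: no edge cut of size less than `k`. -/
def GraphKConn (ends : E → V × V) (k : ℕ) : Prop :=
  ∀ S : Finset E, S.card < k → ∀ u v : V, Reach ends (↑S) u v

/-- `S` is an edge cut: removing it disconnects the graph. -/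
def IsCutSet (ends : E → V × V) (S : Set E) : Prop :=
  ∃ u v : V, ¬ Reach ends S u v

/-- The split graph at the 3-edge cut `{e1, e2, e3}`: the edges `e1, e2, e3` are
removed, and two new vertices `x = Sum.inr false` and `y = Sum.inr true` are added,
with edges joining `y` to the endpoints `a1, a2, a3` (those in one component of
`G \ C`) and `x` to the endpoints `b1, b2, b3` (those in the other component). -/
def splitEnds [DecidableEq E] (ends : E → V × V) (e1 e2 e3 : E)
    (a1 a2 a3 b1 b2 b3 : V) : E ⊕ Fin 3 → (V ⊕ Bool) × (V ⊕ Bool)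
  | .inl e =>
      if e = e1 then (.inl a1, .inr true)
      else if e = e2 then (.inl a2, .inr true)
      else if e = e3 then (.inl a3, .inr true)
      else (.inl (ends e).1, .inl (ends e).2)
  | .inr i => (.inr false, .inl (if i = 0 then b1 else if i = 1 then b2 else b3))


/-! Both directions compare edge cuts, using that `u` and `v` are `k`-edge-connected iff every
vertex set separating them has more than `k - 1` boundary edges.

A cut of `G'` separating `a` from `b` may be replaced by one inside the component of `a`, which
contains at most one of the new vertices `x`, `y`, and then by one avoiding both; sending each new
edge to the cut edge it replaces turns it into a cut of `G` that is no larger.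

Conversely, for a cut `∂P` of `G`, the set `P` is intersected with the side `T` of `C` containing
`a` and `b` and lifted to `G'`, the new vertex of that side included iff most of its three
neighbours lie in `P`. At most one new edge then crosses, and if one does, `P` separates two
endpoints of `C` in `T`, so `∂P` contains an edge outside `T` or in `C`, which the restriction
drops. -/

open Set Function

def boundary (ends : E → V × V) (P : Set V) : Set E :=
  {e | ¬((ends e).1 ∈ P ↔ (ends e).2 ∈ P)}

section Multigraph

variable {V' E' : Type} {ends : E → V × V} {S : Set E} {P T : Set V} {u v : V} {e : E}

theorem mem_boundary : e ∈ boundary ends P ↔ ¬((ends e).1 ∈ P ↔ (ends e).2 ∈ P) := Iff.rfl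

theorem boundary_compl (ends : E → V × V) (P : Set V) : boundary ends Pᶜ = boundary ends P := by
  ext e
  simp [mem_boundary, not_iff_not]

theorem boundary_inter_subset (ends : E → V × V) (P Q : Set V) :
    boundary ends (P ∩ Q) ⊆ boundary ends P ∪ boundary ends Q := by
  intro e
  simp only [mem_boundary, mem_inter_iff, mem_union]
  tauto

theorem mem_boundary_inter_iff (he : e ∉ boundary ends T) :
    e ∈ boundary ends (P ∩ T) ↔ e ∈ boundary ends P ∧ (ends e).1 ∈ T := by
  simp only [mem_boundary, mem_inter_iff] at he ⊢
  tauto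

theorem iff_of_notMem_boundary (h : ends e = (u, v) ∨ ends e = (v, u))
    (he : e ∉ boundary ends P) : u ∈ P ↔ v ∈ P := by
  rw [mem_boundary, not_not] at he
  rcases h with h | h <;> rw [h] at he
  exacts [he, he.symm]

theorem Reach.map {ends' : E' → V' × V'} {S' : Set E'} (f : V → V')
    (hf : ∀ e ∉ S, ∃ e' ∉ S', ends' e' = (f (ends e).1, f (ends e).2))
    (h : Reach ends S u v) : Reach ends' S' (f u) (f v) := by
  refine Relation.ReflTransGen.lift f ?_ _ _ h
  rintro x y ⟨e, he, hxy⟩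
  obtain ⟨e', he', h'⟩ := hf e he
  rcases hxy with hxy | hxy <;> rw [hxy] at h'
  exacts [⟨e', he', Or.inl h'⟩, ⟨e', he', Or.inr h'⟩]

theorem boundary_setOf_reach_subset : boundary ends {v | Reach ends S u v} ⊆ S := by
  intro e he
  by_contra heS
  exact he ⟨fun h => h.tail ⟨e, heS, Or.inl rfl⟩, fun h => h.tail ⟨e, heS, Or.inr rfl⟩⟩

theorem reach_iff_forall_boundary_subset :
    Reach ends S u v ↔ ∀ P : Set V, boundary ends P ⊆ S → (u ∈ P ↔ v ∈ P) := by
  refine ⟨fun h P hP => ?_, fun h => (h _ boundary_setOf_reach_subset).1 .refl⟩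
  induction h with
  | refl => rfl
  | tail _ hstep ih =>
    obtain ⟨e, he, hends⟩ := hstep
    exact ih.trans (iff_of_notMem_boundary hends fun h => he (hP h))

theorem Reach.symm (h : Reach ends S u v) : Reach ends S v u :=
  reach_iff_forall_boundary_subset.2 fun P hP => (reach_iff_forall_boundary_subset.1 h P hP).symm

theorem kConn_iff {k : ℕ} :
    KConn ends k u v ↔
      ∀ P : Set V, ¬(u ∈ P ↔ v ∈ P) → ((k - 1 : ℕ) : ℕ∞) < (boundary ends P).encard := by
  refine ⟨fun h P hP => ?_, fun h S hS => ?_⟩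
  · by_contra! hle
    have hfin := finite_of_encard_le_coe hle
    refine hP (reach_iff_forall_boundary_subset.1 (h hfin.toFinset ?_) P (by simp))
    rwa [hfin.encard_eq_coe_toFinset_card, Nat.cast_le] at hle
  · refine reach_iff_forall_boundary_subset.2 fun P hPS => ?_
    by_contra hP
    have := (h P hP).trans_le (encard_le_encard hPS)
    rw [encard_coe_eq_coe_finsetCard, Nat.cast_lt] at this
    omega

theorem exists_subset_notMem_separating (hT : boundary ends T = ∅) (hu : u ∈ T) (hv : v ∈ T)
    (hP : ¬(u ∈ P ↔ v ∈ P)) (w : V) :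
    ∃ R ⊆ T, w ∉ R ∧ ¬(u ∈ R ↔ v ∈ R) ∧ boundary ends R ⊆ boundary ends P := by
  have hsub (P' : Set V) : boundary ends (T ∩ P') ⊆ boundary ends P' := by
    simpa [hT] using boundary_inter_subset ends T P'
  by_cases hw : w ∈ P
  · refine ⟨T ∩ Pᶜ, inter_subset_left, fun h => h.2 hw, ?_, ?_⟩
    · simpa [hu, hv, not_iff_not] using hP
    · simpa [boundary_compl] using hsub Pᶜ
  · exact ⟨T ∩ P, inter_subset_left, fun h => hw h.2, by simpa [hu, hv] using hP, hsub P⟩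

end Multigraph

def majority (p : Fin 3 → Prop) : Prop :=
  (p 0 ∧ p 1) ∨ (p 0 ∧ p 2) ∨ (p 1 ∧ p 2)

def minority (p : Fin 3 → Prop) : Set (Fin 3) :=
  {j | ¬(p j ↔ majority p)}

theorem encard_minority_le_one (p : Fin 3 → Prop) : (minority p).encard ≤ 1 := by
  refine encard_le_one_iff.2 fun i j hi hj => ?_
  simp only [minority, majority, mem_ofPred_eq] at hi hj
  fin_cases i <;> fin_cases j <;> simp at hi hj ⊢ <;> tauto

theorem minority_eq_empty_of_forall_iff {p : Fin 3 → Prop} (h : ∀ j, p j ↔ p 0) :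
    minority p = ∅ := by
  ext j
  simp only [minority, majority, mem_ofPred_eq, h j, h 1, h 2, mem_empty_iff_false, iff_false]
  tauto

section ThreeCut

variable {ends : E → V × V} {e : Fin 3 → E} {T : Set V} {t o : Fin 3 → V}

theorem forall_iff_of_boundary_subset (hT : boundary ends T ⊆ range e) (ho : ∀ j, o j ∉ T)
    (hto : ∀ j, ends (e j) = (t j, o j) ∨ ends (e j) = (o j, t j))
    (hreach : ∀ j, Reach ends (range e) (o 0) (o j)) {P : Set V}
    (hP : boundary ends P ⊆ boundary ends (P ∩ T) \ range e) (j : Fin 3) :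
    t j ∈ P ↔ t 0 ∈ P := by
  have hout : boundary ends (P ∩ Tᶜ) ⊆ range e := by
    intro f hf
    by_contra hfe
    have hfT : f ∉ boundary ends T := fun h => hfe (hT h)
    obtain ⟨hfP, hf₁⟩ := (mem_boundary_inter_iff (by rwa [boundary_compl])).1 hf
    exact hf₁ ((mem_boundary_inter_iff hfT).1 (hP hfP).1).2
  have ho' (j : Fin 3) : o j ∈ P ↔ o 0 ∈ P := by
    simpa [ho] using (reach_iff_forall_boundary_subset.1 (hreach j) _ hout).symm
  have hto' (j : Fin 3) : t j ∈ P ↔ o j ∈ P :=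
    iff_of_notMem_boundary (hto j) fun h => (hP h).2 ⟨j, rfl⟩
  rw [hto', hto', ho']

/-- The `o`-term vanishes; it is kept so that both sides of the cut fit
`encard_boundary_splitLift_le`. -/
theorem encard_boundary_inter_add_le (hT : boundary ends T ⊆ range e) (ht : ∀ j, t j ∈ T)
    (ho : ∀ j, o j ∉ T) (hto : ∀ j, ends (e j) = (t j, o j) ∨ ends (e j) = (o j, t j))
    (hreach : ∀ j, Reach ends (range e) (o 0) (o j)) (P : Set V) :
    (boundary ends (P ∩ T) \ range e).encard + (minority (t · ∈ P ∩ T)).encard +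
      (minority (o · ∈ P ∩ T)).encard ≤ (boundary ends P).encard := by
  have hmo : minority (o · ∈ P ∩ T) = ∅ := minority_eq_empty_of_forall_iff fun j => by simp [ho]
  have hmt : minority (t · ∈ P ∩ T) = minority (t · ∈ P) := by simp [ht]
  rw [hmo, hmt, encard_empty, add_zero]
  have hsub : boundary ends (P ∩ T) \ range e ⊆ boundary ends P := fun f hf =>
    ((mem_boundary_inter_iff fun h => hf.2 (hT h)).1 hf.1).1
  rcases (minority (t · ∈ P)).eq_empty_or_nonempty with hm | hm
  · simpa [hm] using encard_le_encard hsub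
  have hss : boundary ends (P ∩ T) \ range e ⊂ boundary ends P := by
    refine hsub.ssubset_of_not_subset fun hP => hm.ne_empty ?_
    exact minority_eq_empty_of_forall_iff (forall_iff_of_boundary_subset hT ho hto hreach hP)
  rcases (boundary ends P).finite_or_infinite with hfin | hinf
  · calc _ ≤ (boundary ends (P ∩ T) \ range e).encard + 1 := by
          gcongr; exact encard_minority_le_one _
      _ ≤ _ := Order.add_one_le_of_lt ((hfin.subset hsub).encard_lt_encard hss)
  · simp [hinf.encard_eq]

theorem reach_or_reach_of_graphKConn [DecidableEq E] {a b : Fin 3 → V}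
    (h3 : GraphKConn ends 3) (hends : ∀ j, ends (e j) = (a j, b j)) (v : V) :
    Reach ends (range e) (a 0) v ∨ Reach ends (range e) (b 0) v := by
  set U := {w | Reach ends (range e) (a 0) w} ∪ {w | Reach ends (range e) (b 0) w}
  have hU : boundary ends U ⊆ ↑({e 1, e 2} : Finset E) := by
    intro f hf
    have hfe : f ∈ range e := by
      by_contra hfe
      have h₁ : f ∉ boundary ends _ := fun h => hfe (boundary_setOf_reach_subset (u := a 0) h)
      have h₂ : f ∉ boundary ends _ := fun h => hfe (boundary_setOf_reach_subset (u := b 0) h)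
      simp only [U, mem_boundary, mem_union] at hf h₁ h₂
      tauto
    obtain ⟨j, rfl⟩ := hfe
    fin_cases j
    · refine absurd hf ?_
      simp only [mem_boundary, U, mem_union, mem_ofPred_eq, hends, not_not]
      exact iff_of_true (.inl .refl) (.inr .refl)
    all_goals simp
  have hlt : ({e 1, e 2} : Finset E).card < 3 := Finset.card_le_two.trans_lt (by norm_num)
  exact (reach_iff_forall_boundary_subset.1 (h3 _ hlt (a 0) v) U hU).1 (.inl .refl)

end ThreeCut

section Split

variable [DecidableEq E] {ends : E → V × V} {e : Fin 3 → E} {a b : Fin 3 → V} {u v : V} {k : ℕ}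

local notation "G'" => splitEnds ends (e 0) (e 1) (e 2) (a 0) (a 1) (a 2) (b 0) (b 1) (b 2)

structure IsThreeCut (ends : E → V × V) (e : Fin 3 → E) (a b : Fin 3 → V) : Prop where
  injective : Injective e
  ends_eq : ∀ j, ends (e j) = (a j, b j)
  reach_left : ∀ j, Reach ends (range e) (a 0) (a j)
  reach_right : ∀ j, Reach ends (range e) (b 0) (b j)
  not_reach : ¬ Reach ends (range e) (a 0) (b 0)

theorem splitEnds_inl_of_notMem {f : E} (hf : f ∉ range e) :
    G' (.inl f) = (.inl (ends f).1, .inl (ends f).2) := by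
  have hf' (j : Fin 3) : f ≠ e j := fun h => hf ⟨j, h.symm⟩
  simp [splitEnds, hf']

theorem splitEnds_inl_apply (he : Injective e) (j : Fin 3) :
    G' (.inl (e j)) = (.inl (a j), .inr true) := by
  fin_cases j <;> simp [splitEnds, he.eq_iff]

theorem splitEnds_inr_apply (j : Fin 3) : G' (.inr j) = (.inr false, .inl (b j)) := by
  fin_cases j <;> rfl

def splitLift (a b : Fin 3 → V) (P : Set V) : Set (V ⊕ Bool) :=
  {z | z.elim (· ∈ P) fun s => majority fun j => (if s then a j else b j) ∈ P}

@[simp] theorem inl_mem_splitLift {P : Set V} : .inl v ∈ splitLift a b P ↔ v ∈ P := Iff.rfl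

@[simp] theorem inr_true_mem_splitLift {P : Set V} :
    .inr true ∈ splitLift a b P ↔ majority (a · ∈ P) := Iff.rfl

@[simp] theorem inr_false_mem_splitLift {P : Set V} :
    .inr false ∈ splitLift a b P ↔ majority (b · ∈ P) := Iff.rfl

theorem encard_boundary_splitLift_le (he : Injective e) (P : Set V) :
    (boundary G' (splitLift a b P)).encard ≤ (boundary ends P \ range e).encard +
      (minority (a · ∈ P)).encard + (minority (b · ∈ P)).encard := by
  have hsub : boundary G' (splitLift a b P) ⊆ Sum.inl '' (boundary ends P \ range e) ∪
      (Sum.inl ∘ e) '' minority (a · ∈ P) ∪ Sum.inr '' minority (b · ∈ P) := by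
    rintro (f | j) hf
    · by_cases hfe : f ∈ range e
      · obtain ⟨j, rfl⟩ := hfe
        rw [mem_boundary, splitEnds_inl_apply he] at hf
        exact .inl (.inr ⟨j, by simpa [minority] using hf, rfl⟩)
      · rw [mem_boundary, splitEnds_inl_of_notMem hfe] at hf
        exact .inl (.inl ⟨f, ⟨hf, hfe⟩, rfl⟩)
    · rw [mem_boundary, splitEnds_inr_apply] at hf
      exact .inr ⟨j, by simpa [minority, Iff.comm] using hf, rfl⟩
  calc _ ≤ _ := encard_le_encard hsub
    _ ≤ _ := (encard_union_le _ _).trans (add_le_add (encard_union_le _ _) (encard_image_le _ _))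
    _ ≤ _ := by
      rw [Sum.inl_injective.encard_image]
      gcongr
      exact encard_image_le _ _

theorem encard_boundary_preimage_inl_le (he : Injective e)
    (hends : ∀ j, ends (e j) = (a j, b j)) {R : Set (V ⊕ Bool)} (hR : ∀ s, .inr s ∉ R) :
    (boundary ends (Sum.inl ⁻¹' R)).encard ≤ (boundary G' R).encard := by
  have hsub : boundary ends (Sum.inl ⁻¹' R) ⊆ Sum.elim id e '' boundary G' R := by
    intro f hf
    by_cases hfe : f ∈ range e
    · obtain ⟨j, rfl⟩ := hfe
      rw [mem_boundary, hends] at hf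
      by_cases ha : .inl (a j) ∈ R
      · refine ⟨.inl (e j), ?_, rfl⟩
        simp [mem_boundary, splitEnds_inl_apply he, ha, hR]
      · refine ⟨.inr j, ?_, rfl⟩
        simp_all [mem_boundary, splitEnds_inr_apply]
    · exact ⟨.inl f, by rwa [mem_boundary, splitEnds_inl_of_notMem hfe], rfl⟩
  exact (encard_le_encard hsub).trans (encard_image_le _ _)

theorem reach_splitEnds_of_reach (h : Reach ends (range e) u v) :
    Reach G' ∅ (.inl u) (.inl v) :=
  h.map Sum.inl fun _f hf => ⟨.inl _, notMem_empty _, splitEnds_inl_of_notMem hf⟩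

theorem IsThreeCut.encard_boundary_splitLift_inter_le (hC : IsThreeCut ends e a b) {c : V}
    (hc : c = a 0 ∨ c = b 0) (P : Set V) :
    (boundary G' (splitLift a b (P ∩ {v | Reach ends (range e) c v}))).encard ≤
      (boundary ends P).encard := by
  obtain ⟨he, hends, hA, hB, hsep⟩ := hC
  refine (encard_boundary_splitLift_le he _).trans ?_
  rcases hc with rfl | rfl
  · exact encard_boundary_inter_add_le boundary_setOf_reach_subset hA
      (fun j h => hsep (h.trans (hB j).symm)) (fun j => .inl (hends j)) hB P
  · rw [add_right_comm]
    exact encard_boundary_inter_add_le boundary_setOf_reach_subset hB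
      (fun j h => hsep ((hA j).trans h.symm)) (fun j => .inr (hends j)) hA P

theorem IsThreeCut.boundary_splitLift_eq_empty (hC : IsThreeCut ends e a b) {c : V}
    (hc : c = a 0 ∨ c = b 0) :
    boundary G' (splitLift a b {v | Reach ends (range e) c v}) = ∅ := by
  have h := hC.encard_boundary_splitLift_inter_le hc univ
  have huniv : boundary ends (univ : Set V) = ∅ := by ext; simp [mem_boundary]
  rwa [univ_inter, huniv, encard_empty, nonpos_iff_eq_zero, encard_eq_zero] at h

theorem IsThreeCut.not_reach_splitEnds_inr (hC : IsThreeCut ends e a b) :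
    ¬ Reach G' ∅ (.inr true) (.inr false) := by
  intro h
  have hy : majority (a · ∈ {v | Reach ends (range e) (a 0) v}) :=
    .inl ⟨hC.reach_left 0, hC.reach_left 1⟩
  have hx : ¬ majority (b · ∈ {v | Reach ends (range e) (a 0) v}) := by
    have hb (j : Fin 3) : ¬ Reach ends (range e) (a 0) (b j) := fun h =>
      hC.not_reach (h.trans (hC.reach_right j).symm)
    simp [majority, hb]
  exact hx ((reach_iff_forall_boundary_subset.1 h _
    (hC.boundary_splitLift_eq_empty (.inl rfl)).subset).1 hy)

theorem IsThreeCut.kConn_splitEnds (hC : IsThreeCut ends e a b) (hk : KConn ends k u v)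
    (hr : Reach G' ∅ (.inl u) (.inl v)) : KConn G' k (.inl u) (.inl v) := by
  rw [kConn_iff] at hk ⊢
  intro Q hQ
  set U := {z | Reach G' ∅ (.inl u) z}
  obtain ⟨w, hw⟩ : ∃ w : V ⊕ Bool, ∀ s : Bool, Sum.inr s ∈ U → Sum.inr s = w := by
    by_cases hy : Sum.inr true ∈ U
    · refine ⟨.inr true, fun s hs => ?_⟩
      cases s
      · exact absurd (hy.symm.trans hs) hC.not_reach_splitEnds_inr
      · rfl
    · exact ⟨.inr false, fun s hs => by cases s; rfl; exact absurd hs hy⟩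
  obtain ⟨R, hRU, hwR, hRsep, hRQ⟩ := exists_subset_notMem_separating
    (subset_empty_iff.1 boundary_setOf_reach_subset) .refl hr hQ w
  have hR (s : Bool) : .inr s ∉ R := fun hs => hwR (hw s (hRU hs) ▸ hs)
  calc _ < (boundary ends (Sum.inl ⁻¹' R)).encard := hk _ hRsep
    _ ≤ (boundary G' R).encard := encard_boundary_preimage_inl_le hC.injective hC.ends_eq hR
    _ ≤ _ := encard_le_encard hRQ

theorem IsThreeCut.kConn_of_kConn_splitEnds (hC : IsThreeCut ends e a b)
    (h3 : GraphKConn ends 3) (hk : KConn G' k (.inl u) (.inl v))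
    (hr : Reach G' ∅ (.inl u) (.inl v)) : KConn ends k u v := by
  rw [kConn_iff] at hk ⊢
  intro P hP
  obtain ⟨c, hc, hu⟩ : ∃ c, (c = a 0 ∨ c = b 0) ∧ Reach ends (range e) c u := by
    rcases reach_or_reach_of_graphKConn h3 hC.ends_eq u with h | h
    exacts [⟨_, .inl rfl, h⟩, ⟨_, .inr rfl, h⟩]
  have hv : Reach ends (range e) c v :=
    (reach_iff_forall_boundary_subset.1 hr _ (hC.boundary_splitLift_eq_empty hc).subset).1 hu
  calc _ < _ := hk (splitLift a b (P ∩ {v | Reach ends (range e) c v}))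
        (by simpa [hu, hv] using hP)
    _ ≤ _ := hC.encard_boundary_splitLift_inter_le hc P

end Split

theorem four_edge_connected_iff_in_split_graph_general [DecidableEq E]
    (ends : E → V × V) (h3 : GraphKConn ends 3)
    (e1 e2 e3 : E) (h12 : e1 ≠ e2) (h13 : e1 ≠ e3) (h23 : e2 ≠ e3)
    (a1 a2 a3 b1 b2 b3 : V)
    (hends1 : ends e1 = (a1, b1)) (hends2 : ends e2 = (a2, b2))
    (hends3 : ends e3 = (a3, b3))
    (hA12 : Reach ends {e1, e2, e3} a1 a2) (hA13 : Reach ends {e1, e2, e3} a1 a3)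
    (hB12 : Reach ends {e1, e2, e3} b1 b2) (hB13 : Reach ends {e1, e2, e3} b1 b3)
    (hsep : ¬ Reach ends {e1, e2, e3} a1 b1) :
    ∀ a b : V,
      KConn ends 4 a b ↔
        (Reach (splitEnds ends e1 e2 e3 a1 a2 a3 b1 b2 b3) ∅
            (Sum.inl a) (Sum.inl b) ∧
          KConn (splitEnds ends e1 e2 e3 a1 a2 a3 b1 b2 b3) 4
            (Sum.inl a) (Sum.inl b)) := by
  have hrange : ({e1, e2, e3} : Set E) = range ![e1, e2, e3] := by
    ext
    simp only [mem_insert_iff, mem_singleton_iff, mem_range, Fin.exists_fin_succ]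
    simp [eq_comm]
  rw [hrange] at hA12 hA13 hB12 hB13 hsep
  have hC : IsThreeCut ends ![e1, e2, e3] ![a1, a2, a3] ![b1, b2, b3] := by
    refine ⟨?_, fun j => ?_, fun j => ?_, fun j => ?_, hsep⟩
    · intro i j
      fin_cases i <;> fin_cases j <;> simp [h12, h13, h23, h12.symm, h13.symm, h23.symm]
    all_goals fin_cases j
    exacts [hends1, hends2, hends3, .refl, hA12, hA13, .refl, hB12, hB13]
  intro a b
  refine ⟨fun h => ?_, fun ⟨hr, h⟩ => hC.kConn_of_kConn_splitEnds h3 h hr⟩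
  have hr : Reach (splitEnds ends e1 e2 e3 a1 a2 a3 b1 b2 b3) ∅ (.inl a) (.inl b) :=
    reach_splitEnds_of_reach (e := ![e1, e2, e3]) (a := ![a1, a2, a3]) (b := ![b1, b2, b3])
      (by simpa [← hrange] using h {e1, e2, e3} Finset.card_le_three)
  exact ⟨hr, hC.kConn_splitEnds h hr⟩

/-- Two original vertices `a, b` of a 3-edge-connected graph `G` are
4-edge-connected in `G` iff they lie in the same connected component of the split
graph `G'` at a 3-edge cut `C = {e1, e2, e3}` and are 4-edge-connected there. -/
theorem four_edge_connected_iff_in_split_graph [DecidableEq E]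
    (ends : E → V × V) (h3 : GraphKConn ends 3)
    (e1 e2 e3 : E) (h12 : e1 ≠ e2) (h13 : e1 ≠ e3) (h23 : e2 ≠ e3)
    (hcut : IsCutSet ends {e1, e2, e3})
    (a1 a2 a3 b1 b2 b3 : V)
    (hends1 : ends e1 = (a1, b1)) (hends2 : ends e2 = (a2, b2))
    (hends3 : ends e3 = (a3, b3))
    (hA12 : Reach ends {e1, e2, e3} a1 a2) (hA13 : Reach ends {e1, e2, e3} a1 a3)
    (hB12 : Reach ends {e1, e2, e3} b1 b2) (hB13 : Reach ends {e1, e2, e3} b1 b3)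
    (hsep : ¬ Reach ends {e1, e2, e3} a1 b1) :
    ∀ a b : V,
      KConn ends 4 a b ↔
        (Reach (splitEnds ends e1 e2 e3 a1 a2 a3 b1 b2 b3) ∅
            (Sum.inl a) (Sum.inl b) ∧
          KConn (splitEnds ends e1 e2 e3 a1 a2 a3 b1 b2 b3) 4
            (Sum.inl a) (Sum.inl b)) :=
  four_edge_connected_iff_in_split_graph_general ends h3 e1 e2 e3 h12 h13 h23 a1 a2 a3 b1 b2 b3
    hends1 hends2 hends3 hA12 hA13 hB12 hB13 hsep
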